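/- Let P be a finite set of points in the plane in general position and let s, t ∈ P with sₓ < tₓ. If s is t-protected, then the length of mpath(s,t) is at most 3·‖s−t‖₁. -/
import Mathlib


open scoped BigOperators

/-- Euclidean distance between two points of the plane. -/
noncomputable def dist2 (p q : ℝ × ℝ) : ℝ := Real.sqrt ((p.1 - q.1) ^ 2 + (p.2 - q.2) ^ 2)

/-- `L₁` distance between two points of the plane. -/
def dist1 (p q : ℝ × ℝ) : ℝ := |p.1 - q.1| + |p.2 - q.2|

/-- `L∞` distance between two points of the plane (half the side of `S_t(s)`). -/
def distInf (p q : ℝ × ℝ) : ℝ := max |p.1 - q.1| |p.2 - q.2|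

/-- `cone i p q` : the point `q` lies in the open cone (quadrant) `C_i(p)`. -/
def cone (i : ℕ) (p q : ℝ × ℝ) : Prop :=
  if i = 0 then p.1 < q.1 ∧ q.2 < p.2
  else if i = 1 then p.1 < q.1 ∧ p.2 < q.2
  else if i = 2 then q.1 < p.1 ∧ p.2 < q.2
  else q.1 < p.1 ∧ q.2 < p.2

/-- General position: no two points of `P` on a common vertical line, horizontal line,
or line of slope `+1` or `-1`. -/
def GenPos (P : Finset (ℝ × ℝ)) : Prop :=
  ∀ p ∈ P, ∀ q ∈ P, p ≠ q →
    p.1 ≠ q.1 ∧ p.2 ≠ q.2 ∧ p.2 - p.1 ≠ q.2 - q.1 ∧ p.2 + p.1 ≠ q.2 + q.1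

/-- `IsNbr P i p q` : `q = n_i(p)`, i.e. `q` is a point of `P` in `C_i(p)` minimizing
the `L₁`-distance to `p`. -/
def IsNbr (P : Finset (ℝ × ℝ)) (i : ℕ) (p q : ℝ × ℝ) : Prop :=
  q ∈ P ∧ cone i p q ∧ ∀ r ∈ P, cone i p r → dist1 p q ≤ dist1 p r

/-- Adjacency in the θ₄-graph of `P`. -/
def Theta4Adj (P : Finset (ℝ × ℝ)) (p q : ℝ × ℝ) : Prop :=
  p ∈ P ∧ q ∈ P ∧ ∃ i < 4, (IsNbr P i p q ∨ IsNbr P i q p)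

/-- A walk with `k` edges in the θ₄-graph of `P`, given by its vertices `v 0, …, v k`. -/
def IsTheta4Path (P : Finset (ℝ × ℝ)) (k : ℕ) (v : ℕ → ℝ × ℝ) : Prop :=
  v 0 ∈ P ∧ ∀ j < k, Theta4Adj P (v j) (v (j + 1))

/-- The Euclidean length of a path with `k` edges. -/
noncomputable def pathLength (k : ℕ) (v : ℕ → ℝ × ℝ) : ℝ :=
  ∑ j ∈ Finset.range k, dist2 (v j) (v (j + 1))

/-- `p` is `t`-protected: no point of `P` lying in `C₁(p)` is on or below the line `ℓ⁻_t`
of slope `-1` through `t`. -/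
def TProtected (P : Finset (ℝ × ℝ)) (t p : ℝ × ℝ) : Prop :=
  ∀ q ∈ P, cone 1 p q → t.1 + t.2 < q.1 + q.2

/-- `IsMpath P s t k v` : `v 0, …, v k` is the greedy path `mpath(s,t)` : it starts at `s`,
at each step it moves to `n₀(z)` if the current point `z` is `t`-protected and to `n₁(z)`
otherwise, no intermediate point satisfies the stopping condition, and the final point is
either `t` or a `t`-protected point strictly to the right of `t`. -/
def IsMpath (P : Finset (ℝ × ℝ)) (s t : ℝ × ℝ) (k : ℕ) (v : ℕ → ℝ × ℝ) : Prop :=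
  v 0 = s ∧
  (∀ j < k, (TProtected P t (v j) → IsNbr P 0 (v j) (v (j + 1))) ∧
            (¬ TProtected P t (v j) → IsNbr P 1 (v j) (v (j + 1)))) ∧
  (∀ j < k, ¬ (v j = t ∨ (TProtected P t (v j) ∧ t.1 < (v j).1))) ∧
  (v k = t ∨ (TProtected P t (v k) ∧ t.1 < (v k).1))


lemma cone0_iff (p q : ℝ × ℝ) : cone 0 p q ↔ p.1 < q.1 ∧ q.2 < p.2 := by simp [cone]

lemma cone1_iff (p q : ℝ × ℝ) : cone 1 p q ↔ p.1 < q.1 ∧ p.2 < q.2 := by simp [cone]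

lemma dist1_nonneg (p q : ℝ × ℝ) : 0 ≤ dist1 p q := add_nonneg (abs_nonneg _) (abs_nonneg _)

lemma dist1_up (p q : ℝ × ℝ) (h1 : p.1 < q.1) (h2 : p.2 < q.2) :
    dist1 p q = (q.1 - p.1) + (q.2 - p.2) := by
  rw [dist1, abs_of_neg (by linarith : p.1 - q.1 < 0), abs_of_neg (by linarith : p.2 - q.2 < 0)]
  ring

lemma dist1_down (p q : ℝ × ℝ) (h1 : p.1 < q.1) (h2 : q.2 < p.2) :
    dist1 p q = (q.1 - p.1) + (p.2 - q.2) := by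
  rw [dist1, abs_of_neg (by linarith : p.1 - q.1 < 0), abs_of_pos (by linarith : (0:ℝ) < p.2 - q.2)]
  ring

lemma dist2_le_dist1 (p q : ℝ × ℝ) : dist2 p q ≤ dist1 p q := by
  have h1 : (0:ℝ) ≤ |p.1 - q.1| + |p.2 - q.2| := add_nonneg (abs_nonneg _) (abs_nonneg _)
  rw [dist2, dist1]
  rw [show (p.1 - q.1) ^ 2 + (p.2 - q.2) ^ 2 = |p.1 - q.1| ^ 2 + |p.2 - q.2| ^ 2 by
    rw [sq_abs, sq_abs]]
  calc Real.sqrt (|p.1 - q.1| ^ 2 + |p.2 - q.2| ^ 2)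
      ≤ Real.sqrt ((|p.1 - q.1| + |p.2 - q.2|) ^ 2) := by
        apply Real.sqrt_le_sqrt
        nlinarith [abs_nonneg (p.1 - q.1), abs_nonneg (p.2 - q.2)]
    _ = |p.1 - q.1| + |p.2 - q.2| := Real.sqrt_sq h1

/-- If `s` is `t`-protected, then the length of `mpath(s,t)` is at most `3·‖s−t‖₁`. -/
theorem mpath_length (P : Finset (ℝ × ℝ)) (hP : GenPos P) (s t : ℝ × ℝ)
    (hs : s ∈ P) (ht : t ∈ P) (hx : s.1 < t.1) (hprot : TProtected P t s)
    (k : ℕ) (v : ℕ → ℝ × ℝ) (hm : IsMpath P s t k v) :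
    pathLength k v ≤ 3 * dist1 s t := by
  obtain ⟨h0, hstep, hstop, hfin⟩ := hm
  -- all path vertices belong to `P`
  have hmem : ∀ i, i ≤ k → v i ∈ P := by
    intro i
    induction i with
    | zero => intro _; rw [h0]; exact hs
    | succ n ih =>
      intro hn
      have hn' : n < k := by omega
      by_cases hp : TProtected P t (v n)
      · exact ((hstep n hn').1 hp).1
      · exact ((hstep n hn').2 hp).1
  -- x-coordinates strictly increase along the path
  have hxstep : ∀ i, i < k → (v i).1 < (v (i + 1)).1 := by
    intro i hi
    by_cases hp : TProtected P t (v i)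
    · have h := ((hstep i hi).1 hp).2.1
      rw [cone0_iff] at h; exact h.1
    · have h := ((hstep i hi).2 hp).2.1
      rw [cone1_iff] at h; exact h.1
  have hxmono : ∀ i j, i < j → j ≤ k → (v i).1 < (v j).1 := by
    intro i j hij hjk
    induction j with
    | zero => omega
    | succ n ih =>
      rcases Nat.lt_succ_iff_lt_or_eq.mp hij with h | h
      · exact lt_trans (ih h (by omega)) (hxstep n (by omega))
      · subst h; exact hxstep i (by omega)
  -- `t` is `t`-protected
  have htprot : TProtected P t t := by
    intro q hq hc
    rw [cone1_iff] at hc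
    linarith [hc.1, hc.2]
  -- the last vertex is `t`-protected
  have hvk : TProtected P t (v k) := by
    rcases hfin with h | h
    · rw [h]; exact htprot
    · exact h.1
  -- protected intermediate vertices lie strictly up-left of `t`
  have hupleft : ∀ j, j < k → TProtected P t (v j) → (v j).1 < t.1 ∧ t.2 < (v j).2 := by
    intro j hj hp
    have hne : v j ≠ t := fun h => hstop j hj (Or.inl h)
    have hx' : ¬ t.1 < (v j).1 := fun h => hstop j hj (Or.inr ⟨hp, h⟩)
    have hgp := hP (v j) (hmem j hj.le) t ht hne
    have h1 : (v j).1 < t.1 := lt_of_le_of_ne (not_lt.mp hx') hgp.1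
    refine ⟨h1, ?_⟩
    rcases lt_or_gt_of_ne hgp.2.1 with h | h
    · exfalso
      have hc : cone 1 (v j) t := (cone1_iff _ _).mpr ⟨h1, h⟩
      have := hp t ht hc
      linarith
    · exact h
  -- the tail sums
  set T : ℕ → ℝ := fun j => ∑ i ∈ Finset.Ico j k, dist1 (v i) (v (i + 1)) with hT
  have hTstep : ∀ j, j < k → T j = dist1 (v j) (v (j + 1)) + T (j + 1) := by
    intro j hj
    simp only [hT]
    exact Finset.sum_eq_sum_Ico_succ_bot hj _
  have hTk : T k = 0 := by simp [hT]
  -- climbing phase: from an unprotected vertex the path moves up-right, with total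
  -- length telescoping in x+y, until it reaches a protected vertex on/below ℓ⁻_t
  have hclimb : ∀ n j, k - j ≤ n → j ≤ k → ¬ TProtected P t (v j) →
      ∃ m, j < m ∧ m ≤ k ∧ TProtected P t (v m) ∧
        T j = ((v m).1 + (v m).2 - (v j).1 - (v j).2) + T m ∧
        (v m).1 + (v m).2 ≤ t.1 + t.2 := by
    intro n
    induction n with
    | zero =>
      intro j hkj hjk hnp
      have hj : j = k := by omega
      rw [hj] at hnp
      exact absurd hvk hnp
    | succ n ih =>
      intro j hkj hjk hnp
      have hjk' : j < k := by
        rcases lt_or_eq_of_le hjk with h | h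
        · exact h
        · rw [h] at hnp; exact absurd hvk hnp
      have hnbr := (hstep j hjk').2 hnp
      have hc : (v j).1 < (v (j + 1)).1 ∧ (v j).2 < (v (j + 1)).2 := by
        have := hnbr.2.1; rwa [cone1_iff] at this
      have hnp' : ¬ ∀ q ∈ P, cone 1 (v j) q → t.1 + t.2 < q.1 + q.2 := hnp
      push_neg at hnp'
      obtain ⟨q, hqP, hqc, hqφ⟩ := hnp'
      have hqc' := hqc
      rw [cone1_iff] at hqc'
      have hmin := hnbr.2.2 q hqP hqc
      rw [dist1_up _ _ hc.1 hc.2, dist1_up _ _ hqc'.1 hqc'.2] at hmin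
      have hφ1 : (v (j + 1)).1 + (v (j + 1)).2 ≤ t.1 + t.2 := by linarith
      have hedge : dist1 (v j) (v (j + 1))
          = (v (j + 1)).1 + (v (j + 1)).2 - (v j).1 - (v j).2 := by
        rw [dist1_up _ _ hc.1 hc.2]; ring
      by_cases hp1 : TProtected P t (v (j + 1))
      · refine ⟨j + 1, Nat.lt_succ_self j, hjk', hp1, ?_, hφ1⟩
        rw [hTstep j hjk', hedge]
        all_goals ring
      · obtain ⟨m, hm1, hm2, hm3, hm4, hm5⟩ := ih (j + 1) (by omega) hjk' hp1
        refine ⟨m, by omega, hm2, hm3, ?_, hm5⟩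
        rw [hTstep j hjk', hedge, hm4]; ring
  -- main induction: from any protected vertex the remaining length is at most
  -- three times the L₁-distance to `t`
  have hmain : ∀ n j, k - j ≤ n → j ≤ k → TProtected P t (v j) →
      T j ≤ 3 * dist1 (v j) t := by
    intro n
    induction n with
    | zero =>
      intro j hkj hjk _
      have hj : j = k := by omega
      rw [hj, hTk]
      have := dist1_nonneg (v k) t
      linarith
    | succ n ih =>
      intro j hkj hjk hp
      rcases eq_or_lt_of_le hjk with heq | hjk'
      · rw [heq, hTk]
        have := dist1_nonneg (v k) t
        linarith
      · have hul := hupleft j hjk' hp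
        obtain ⟨hzx, hzy⟩ := hul
        have hnbr := (hstep j hjk').1 hp
        have hc : (v j).1 < (v (j + 1)).1 ∧ (v (j + 1)).2 < (v j).2 := by
          have := hnbr.2.1; rwa [cone0_iff] at this
        have hct : cone 0 (v j) t := (cone0_iff _ _).mpr ⟨hzx, hzy⟩
        have hlt := hnbr.2.2 t ht hct
        rw [dist1_down _ _ hc.1 hc.2, dist1_down _ _ hzx hzy] at hlt
        by_cases hp1 : TProtected P t (v (j + 1))
        · by_cases hk1 : j + 1 < k
          · -- staircase step towards t
            have hul1 := hupleft (j + 1) hk1 hp1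
            have ihm := ih (j + 1) (by omega) hk1.le hp1
            rw [dist1_down _ _ hul1.1 hul1.2] at ihm
            rw [hTstep j hjk', dist1_down _ _ hc.1 hc.2, dist1_down _ _ hzx hzy]
            linarith [hc.1, hc.2, hul1.1, hul1.2]
          · have hk : j + 1 = k := by omega
            have hTj1 : T (j + 1) = 0 := by rw [hk]; exact hTk
            rw [hTstep j hjk', hTj1, dist1_down _ _ hc.1 hc.2, dist1_down _ _ hzx hzy]
            linarith
        · obtain ⟨m, hm1, hm2, hm3, hm4, hm5⟩ :=
            hclimb (k - (j + 1)) (j + 1) le_rfl hjk' hp1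
          have hxjm : (v j).1 < (v m).1 := hxmono j m (by omega) hm2
          rw [hTstep j hjk', hm4]
          by_cases hmk : m < k
          · -- the path returns to a protected vertex up-left of t
            have hulm := hupleft m hmk hm3
            have hwy : (v m).2 < (v j).2 := by
              have hne : v j ≠ v m := by
                intro h
                rw [h] at hxjm
                exact lt_irrefl _ hxjm
              have hgp := hP (v j) (hmem j hjk'.le) (v m) (hmem m hm2) hne
              rcases lt_or_gt_of_ne hgp.2.1 with h | h
              · exfalso
                have hcw : cone 1 (v j) (v m) := (cone1_iff _ _).mpr ⟨hxjm, h⟩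
                have := hp (v m) (hmem m hm2) hcw
                linarith
              · exact h
            have hminw := hnbr.2.2 (v m) (hmem m hm2) ((cone0_iff _ _).mpr ⟨hxjm, hwy⟩)
            rw [dist1_down _ _ hc.1 hc.2, dist1_down _ _ hxjm hwy] at hminw
            have ihm := ih m (by omega) hm2 hm3
            rw [dist1_down _ _ hulm.1 hulm.2] at ihm
            rw [dist1_down _ _ hc.1 hc.2, dist1_down _ _ hzx hzy]
            linarith [hc.1, hulm.1, hulm.2]
          · -- the path terminates to the right of t
            have hmk' : m = k := by omega
            have hTm : T m = 0 := by rw [hmk']; exact hTk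
            rw [hTm, dist1_down _ _ hc.1 hc.2, dist1_down _ _ hzx hzy]
            linarith [hc.1]
  have h2 := hmain k 0 (by omega) (Nat.zero_le k) (by rw [h0]; exact hprot)
  rw [h0] at h2
  have h1 : pathLength k v ≤ T 0 := by
    simp only [hT, pathLength, Finset.range_eq_Ico]
    exact Finset.sum_le_sum fun i _ => dist2_le_dist1 _ _
  linarith
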